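/- There exists an (ω₀+1)-metric space X such that every compact metric space is a pseudo-cone of X, i.e., pc(X) contains all compact metric spaces. -/

import Mathlib

open Metric Filter Set
open scoped ENNReal NNReal Topology

noncomputable section

universe u v

/-! ### Scaling of metric spaces -/

/-- The metric space obtained from `m` by multiplying the metric by `h > 0`
(the space `hX` of the paper). -/
def scaleMS {X : Type*} (h : ℝ) (hh : 0 < h) (m : MetricSpace X) : MetricSpace X := by
  letI := m
  exact MetricSpace.ofDistTopology (fun x y => h * dist x y)
    (fun x => by simp)
    (fun x y => by simp [dist_comm])
    (fun x y z => by
      show h * dist x z ≤ h * dist x y + h * dist y z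
      have := dist_triangle x y z
      nlinarith)
    (fun s => by
      rw [Metric.isOpen_iff]
      constructor
      · rintro H x hx
        obtain ⟨ε, hε, h'⟩ := H x hx
        refine ⟨h * ε, by positivity, fun y (hy : h * dist x y < h * ε) => h' ?_⟩
        have : dist x y < ε := by nlinarith
        simpa [Metric.mem_ball, dist_comm] using this
      · rintro H x hx
        obtain ⟨ε, hε, h'⟩ := H x hx
        refine ⟨ε / h, by positivity, fun y hy => h' y ?_⟩
        have hb : dist x y < ε / h := by
          have : dist y x < ε / h := hy
          simpa [dist_comm] using this
        show h * dist x y < ε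
        calc h * dist x y < h * (ε / h) := by nlinarith
          _ = ε := by field_simp)
    (fun x y hxy => by
      have hd : dist x y = 0 := by
        have h0 : dist x y ≥ 0 := dist_nonneg
        have : h * dist x y = 0 := hxy
        nlinarith
      exact eq_of_dist_eq_zero hd)

/-- The scaled metric on a subset `A` of a metric space (the space `hA`). -/
def scaledSubMS {X : Type*} [MetricSpace X] (A : Set X) (h : ℝ) (hh : 0 < h) :
    MetricSpace A := scaleMS h hh inferInstance

/-! ### The Gromov–Hausdorff distance and pseudo-cones -/

/-- The Gromov–Hausdorff distance between two (arbitrary) metric spaces: the infimum of the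
Hausdorff distances between isometric copies of the two spaces inside a common metric
space. -/
def ghDist (X : Type u) (Y : Type v) [MetricSpace X] [MetricSpace Y] : ℝ≥0∞ :=
  ⨅ (Z : Type (max u v)) (_ : MetricSpace Z) (f : X → Z) (g : Y → Z)
    (_ : Isometry f) (_ : Isometry g),
      EMetric.hausdorffEdist (Set.range f) (Set.range g)

/-- `P` is a pseudo-cone of `X` if it is the Gromov–Hausdorff limit of a sequence `uᵢAᵢ`
of rescaled subsets of `X`. -/
def IsPseudoCone (X : Type u) [MetricSpace X] (P : Type v) [MetricSpace P] : Prop :=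
  ∃ (A : ℕ → Set X) (u : ℕ → ℝ) (hu : ∀ i, 0 < u i),
    Tendsto (fun i => @ghDist ↥(A i) P (scaledSubMS (A i) (u i) (hu i)) _) atTop (𝓝 0)

/-- `P` is a pseudo-cone of `X` approximated by a sequence of *compact* subsets of `X`
(`P ∈ kpc(X)`). -/
def IsCompactPseudoCone (X : Type u) [MetricSpace X] (P : Type v) [MetricSpace P] : Prop :=
  ∃ (A : ℕ → Set X) (u : ℕ → ℝ) (hu : ∀ i, 0 < u i),
    (∀ i, IsCompact (A i)) ∧
    Tendsto (fun i => @ghDist ↥(A i) P (scaledSubMS (A i) (u i) (hu i)) _) atTop (𝓝 0)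

/-! ### Assouad dimensions -/

/-- The set `𝒜(X)` of Assouad exponents: `β > 0` such that for some `C > 0` every bounded
set `S` can be covered, for every `r > 0`, by at most `C (δ(S)/r)^β` bounded sets of
diameter at most `r`. -/
def assouadExpSet (X : Type u) [MetricSpace X] : Set ℝ :=
  {β | 0 < β ∧ ∃ C : ℝ, 0 < C ∧ ∀ S : Set X, Bornology.IsBounded S → ∀ r : ℝ, 0 < r →
    ∃ F : Finset (Set X), (∀ t ∈ F, Bornology.IsBounded t ∧ Metric.diam t ≤ r) ∧
      S ⊆ ⋃ t ∈ F, t ∧ (F.card : ℝ) ≤ C * (Metric.diam S / r) ^ β}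

/-- The Assouad dimension of a metric space, with values in `ℝ≥0∞`
(equal to `∞` if no exponent works, since `sInf ∅ = ⊤`). -/
def assouadDim (X : Type u) [MetricSpace X] : ℝ≥0∞ :=
  sInf (ENNReal.ofReal '' assouadExpSet X)

/-- The set `𝓑(X)`: exponents `β > 0` such that for some `C > 0` every finite subset `A`
of `X` satisfies `card A ≤ C (δ(A)/α(A))^β`, where `δ` is the diameter and `α` the minimal
positive separation. -/
def assouadFinSet (X : Type u) [MetricSpace X] : Set ℝ :=
  {β | 0 < β ∧ ∃ C : ℝ, 0 < C ∧ ∀ A : Finset X,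
    (A.card : ℝ) ≤ C * (Metric.diam (A : Set X) / Set.infsep (A : Set X)) ^ β}

/-- The lower Assouad dimension of a metric space: the supremum of all `β > 0` such that
for some `C > 0` every finite set `S` satisfies `card S ≥ C (δ(S)/α(S))^β`. -/
def lowerAssouadDim (X : Type u) [MetricSpace X] : ℝ≥0∞ :=
  sSup (ENNReal.ofReal ''
    {β : ℝ | 0 < β ∧ ∃ C : ℝ, 0 < C ∧ ∀ S : Finset X,
      C * (Metric.diam (S : Set X) / Set.infsep (S : Set X)) ^ β ≤ (S.card : ℝ)})

/-- A metric space is doubling if there is `N` such that every bounded set `S` is contained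
in the union of at most `N` closed balls of radius `δ(S)/2`. -/
def IsDoublingSpace (X : Type u) [MetricSpace X] : Prop :=
  ∃ N : ℕ, ∀ S : Set X, Bornology.IsBounded S →
    ∃ F : Finset X, F.card ≤ N ∧ S ⊆ ⋃ x ∈ F, Metric.closedBall x (Metric.diam S / 2)

/-! ### Quasi-symmetric maps and the conformal Assouad dimension -/

/-- `f : X → Y` is a quasi-symmetric map: a homeomorphism which is `η`-quasi-symmetric for
some homeomorphism `η` of `[0,∞)` (modelled as `ℝ≥0`). -/
def IsQuasiSymmetric {X : Type u} {Y : Type v} [MetricSpace X] [MetricSpace Y]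
    (f : X → Y) : Prop :=
  IsHomeomorph f ∧ ∃ η : ℝ≥0 → ℝ≥0, IsHomeomorph η ∧
    ∀ (t : ℝ≥0) (x y z : X), dist x y ≤ (t : ℝ) * dist x z →
      dist (f x) (f y) ≤ (η t : ℝ) * dist (f x) (f z)

/-- The conformal Assouad dimension: the infimum of the Assouad dimensions of all
quasi-symmetric images of `X`. -/
def confAssouadDim (X : Type u) [MetricSpace X] : ℝ≥0∞ :=
  ⨅ (Y : Type u) (_ : MetricSpace Y) (f : X → Y) (_ : IsQuasiSymmetric f), assouadDim Y

/-! ### Ultralimits -/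

/-- The limit of a sequence in `ℝ≥0∞` along an ultrafilter (it always exists, by
compactness of `ℝ≥0∞`). -/
def ultraLim (𝒰 : Ultrafilter ℕ) (f : ℕ → ℝ≥0∞) : ℝ≥0∞ := (𝒰.map f).lim

theorem tendsto_ultraLim (𝒰 : Ultrafilter ℕ) (f : ℕ → ℝ≥0∞) :
    Tendsto f 𝒰 (𝓝 (ultraLim 𝒰 f)) := by
  have := (𝒰.map f).le_nhds_lim
  rwa [Ultrafilter.coe_map] at this

theorem ultraLim_eq (𝒰 : Ultrafilter ℕ) {f : ℕ → ℝ≥0∞} {a : ℝ≥0∞}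
    (h : Tendsto f 𝒰 (𝓝 a)) : ultraLim 𝒰 f = a :=
  tendsto_nhds_unique (tendsto_ultraLim 𝒰 f) h

/-- Type synonym for the product `∀ i, X i`, carrying the ultralimit
pseudo-extended-metric `edist x y = lim_𝒰 edist (x i) (y i)`. -/
def PreUltralimit (𝒰 : Ultrafilter ℕ) (X : ℕ → Type u) : Type u := ∀ i, X i

instance PreUltralimit.pseudoEMetricSpace (𝒰 : Ultrafilter ℕ) (X : ℕ → Type u)
    [∀ i, MetricSpace (X i)] : PseudoEMetricSpace (PreUltralimit 𝒰 X) where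
  edist x y := ultraLim 𝒰 fun i => edist (x i) (y i)
  edist_self x := ultraLim_eq 𝒰 (by simp [tendsto_const_nhds])
  edist_comm x y := by simp only [edist_comm]
  edist_triangle x y z := by
    have hxy := tendsto_ultraLim 𝒰 fun i => edist (x i) (y i)
    have hyz := tendsto_ultraLim 𝒰 fun i => edist (y i) (z i)
    have hxz := tendsto_ultraLim 𝒰 fun i => edist (x i) (z i)
    exact le_of_tendsto_of_tendsto' hxz (hxy.add hyz) fun i => edist_triangle _ _ _

/-- The class of the base point sequence in the separation quotient. -/
def ultralimitRefPt (𝒰 : Ultrafilter ℕ) (X : ℕ → Type u) [∀ i, MetricSpace (X i)]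
    (p : ∀ i, X i) : SeparationQuotient (PreUltralimit 𝒰 X) :=
  SeparationQuotient.mk p

/-- The ultralimit of a sequence of pointed metric spaces with respect to an ultrafilter:
sequences at finite limit distance from the base point sequence, two sequences being
identified when the ultralimit of their mutual distances vanishes. -/
def Ultralimit (𝒰 : Ultrafilter ℕ) (X : ℕ → Type u) [∀ i, MetricSpace (X i)]
    (p : ∀ i, X i) : Type u :=
  { q : SeparationQuotient (PreUltralimit 𝒰 X) // edist q (ultralimitRefPt 𝒰 X p) ≠ ⊤ }

instance Ultralimit.emetricSpace (𝒰 : Ultrafilter ℕ) (X : ℕ → Type u)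
    [∀ i, MetricSpace (X i)] (p : ∀ i, X i) : EMetricSpace (Ultralimit 𝒰 X p) := by
  unfold Ultralimit; infer_instance

instance Ultralimit.metricSpace (𝒰 : Ultrafilter ℕ) (X : ℕ → Type u)
    [∀ i, MetricSpace (X i)] (p : ∀ i, X i) : MetricSpace (Ultralimit 𝒰 X p) :=
  EMetricSpace.toMetricSpace (by
    rintro ⟨x, hx⟩ ⟨y, hy⟩
    show edist x y ≠ ⊤
    have h1 : edist x y ≤ edist x (ultralimitRefPt 𝒰 X p) +
        edist (ultralimitRefPt 𝒰 X p) y := edist_triangle _ _ _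
    have h2 : edist x (ultralimitRefPt 𝒰 X p) + edist (ultralimitRefPt 𝒰 X p) y ≠ ⊤ :=
      ENNReal.add_ne_top.2 ⟨hx, by rw [edist_comm]; exact hy⟩
    exact fun h => h2 (top_le_iff.1 (h ▸ h1)))

/-- The canonical base point of an ultralimit. -/
def Ultralimit.basePt (𝒰 : Ultrafilter ℕ) (X : ℕ → Type u) [∀ i, MetricSpace (X i)]
    (p : ∀ i, X i) : Ultralimit 𝒰 X p :=
  ⟨ultralimitRefPt 𝒰 X p, by simp⟩

/-! ### Pointed Gromov–Hausdorff convergence, cones -/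

/-- An `ε`-approximation between two metric spaces. -/
def IsApproximation {X : Type u} {Y : Type v} [MetricSpace X] [MetricSpace Y]
    (ε : ℝ) (f : X → Y) (g : Y → X) : Prop :=
  (∀ x y : X, |dist x y - dist (f x) (f y)| < ε) ∧
  (∀ x y : Y, |dist x y - dist (g x) (g y)| < ε) ∧
  (∀ x : X, dist (g (f x)) x < ε) ∧
  (∀ y : Y, dist (f (g y)) y < ε)

/-- Convergence of a sequence of pointed metric spaces in the pointed Gromov–Hausdorff
topology, via approximation maps respecting the base points. -/
def TendstoPointedGH (X : ℕ → Type u) [∀ i, MetricSpace (X i)] (p : ∀ i, X i)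
    (Y : Type v) [MetricSpace Y] (q : Y) : Prop :=
  ∃ (ε : ℕ → ℝ) (f : ∀ i, X i → Y) (g : ∀ i, Y → X i),
    (∀ i, 0 < ε i) ∧ Tendsto ε atTop (𝓝 0) ∧
    ∀ i, IsApproximation (ε i) (f i) (g i) ∧ f i (p i) = q ∧ g i q = p i

/-- `(Y, y)` is a tangent cone of `X` at `p`: there are points `pᵢ → p` and scales
`rᵢ → ∞` such that for every `R > 0` the rescaled closed balls `rᵢ B(pᵢ, R/rᵢ)` converge
to `B(y, R)` in the pointed Gromov–Hausdorff topology. -/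
def IsTangentCone (X : Type u) [MetricSpace X] (p : X) (Y : Type v) [MetricSpace Y]
    (y : Y) : Prop :=
  ∃ (pt : ℕ → X) (r : ℕ → ℝ) (hr : ∀ i, 0 < r i),
    Tendsto pt atTop (𝓝 p) ∧ Tendsto r atTop atTop ∧
    ∀ (R : ℝ) (hR : 0 < R),
      @TendstoPointedGH (fun i => ↥(Metric.closedBall (pt i) (R / r i)))
        (fun i => scaledSubMS _ (r i) (hr i))
        (fun i => ⟨pt i, Metric.mem_closedBall_self (le_of_lt (div_pos hR (hr i)))⟩)
        ↥(Metric.closedBall y R) _ ⟨y, Metric.mem_closedBall_self hR.le⟩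

/-- `(Y, y)` is an asymptotic cone of `X` at `p`: as for tangent cones, but with
scales `rᵢ → 0`. -/
def IsAsymptoticCone (X : Type u) [MetricSpace X] (p : X) (Y : Type v) [MetricSpace Y]
    (y : Y) : Prop :=
  ∃ (pt : ℕ → X) (r : ℕ → ℝ) (hr : ∀ i, 0 < r i),
    Tendsto pt atTop (𝓝 p) ∧ Tendsto r atTop (𝓝 0) ∧
    ∀ (R : ℝ) (hR : 0 < R),
      @TendstoPointedGH (fun i => ↥(Metric.closedBall (pt i) (R / r i)))
        (fun i => scaledSubMS _ (r i) (hr i))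
        (fun i => ⟨pt i, Metric.mem_closedBall_self (le_of_lt (div_pos hR (hr i)))⟩)
        ↥(Metric.closedBall y R) _ ⟨y, Metric.mem_closedBall_self hR.le⟩

/-! ### Length spaces and `(ω₀+1)`-spaces -/

/-- A length space: the (extended) distance between two points is the infimum of the
lengths of the paths joining them. -/
def IsLengthSpace (X : Type u) [MetricSpace X] : Prop :=
  ∀ x y : X, edist x y = ⨅ γ : Path x y, eVariationOn γ Set.univ

/-- A metric space whose topology is that of the one-point compactification of a countable
discrete space. -/
def IsOmegaPlusOneSpace (X : Type u) [TopologicalSpace X] : Prop :=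
  Nonempty (X ≃ₜ OnePoint ℕ)

/-! ### Auxiliary development for Theorem 1.5 -/

section Aux

/-- Upper bound for `ghDist` given an almost-isometric almost-dense map. -/
theorem ghDist_le_of_approx {A : Type u} {K : Type v} [MetricSpace A] [MetricSpace K]
    [Nonempty A] (f : A → K) (ε : ℝ) (hε : 0 < ε)
    (hdist : ∀ a b : A, |dist a b - dist (f a) (f b)| ≤ 2 * ε)
    (hdense : ∀ k : K, ∃ a : A, dist (f a) k ≤ ε) :
    ghDist A K ≤ ENNReal.ofReal (2 * ε) := by
  letI Zm : MetricSpace (A ⊕ K) :=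
    Metric.glueMetricApprox (id : A → A) f ε hε (by simpa using hdist)
  have hbdd : ∀ (a : A) (k : K), BddBelow (Set.range fun p : A => dist a p + dist k (f p)) := by
    intro a k
    exact ⟨0, by rintro r ⟨p, rfl⟩; positivity⟩
  have hinl : Isometry (Sum.inl : A → A ⊕ K) := Isometry.of_dist_eq fun a b => rfl
  have hinr : Isometry (Sum.inr : K → A ⊕ K) := Isometry.of_dist_eq fun a b => rfl
  have hH : EMetric.hausdorffEdist (Set.range (Sum.inl : A → A ⊕ K))
      (Set.range (Sum.inr : K → A ⊕ K)) ≤ ENNReal.ofReal (2 * ε) := by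
    apply EMetric.hausdorffEdist_le_of_mem_edist
    · rintro _ ⟨a, rfl⟩
      refine ⟨Sum.inr (f a), ⟨f a, rfl⟩, ?_⟩
      rw [edist_dist]
      apply ENNReal.ofReal_le_ofReal
      have h1 : dist (Sum.inl a : A ⊕ K) (Sum.inr (f a)) =
          (⨅ p : A, dist a (id p) + dist (f a) (f p)) + ε := rfl
      rw [h1]
      have h2 : (⨅ p : A, dist a (id p) + dist (f a) (f p)) ≤ 0 := by
        have := ciInf_le (hbdd a (f a)) a
        simpa using this
      linarith
    · rintro _ ⟨k, rfl⟩
      obtain ⟨a, ha⟩ := hdense k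
      refine ⟨Sum.inl a, ⟨a, rfl⟩, ?_⟩
      rw [edist_dist]
      apply ENNReal.ofReal_le_ofReal
      have h1 : dist (Sum.inr k : A ⊕ K) (Sum.inl a) =
          (⨅ p : A, dist a (id p) + dist k (f p)) + ε := rfl
      rw [h1]
      have h2 : (⨅ p : A, dist a (id p) + dist k (f p)) ≤ ε := by
        have := ciInf_le (hbdd a k) a
        simp only [id_eq, dist_self, zero_add] at this
        exact this.trans (by rwa [dist_comm])
      linarith
  calc ghDist A K ≤ EMetric.hausdorffEdist (Set.range (Sum.inl : A → A ⊕ K))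
        (Set.range (Sum.inr : K → A ⊕ K)) := by
        refine iInf_le_of_le (A ⊕ K) ?_
        refine iInf_le_of_le Zm ?_
        refine iInf_le_of_le Sum.inl ?_
        refine iInf_le_of_le Sum.inr ?_
        exact iInf_le_of_le hinl (iInf_le_of_le hinr le_rfl)
    _ ≤ ENNReal.ofReal (2 * ε) := hH

/-- `ghDist` between two empty spaces vanishes. -/
theorem ghDist_empty_empty {A : Type u} {K : Type v} [MetricSpace A] [MetricSpace K]
    [IsEmpty A] [IsEmpty K] : ghDist A K = 0 := by
  refine le_antisymm ?_ zero_le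
  refine iInf_le_of_le PUnit ?_
  refine iInf_le_of_le inferInstance ?_
  refine iInf_le_of_le isEmptyElim ?_
  refine iInf_le_of_le isEmptyElim ?_
  refine iInf_le_of_le (fun a => isEmptyElim a) ?_
  refine iInf_le_of_le (fun a => isEmptyElim a) ?_
  rw [Set.range_eq_empty, Set.range_eq_empty]
  exact (Metric.hausdorffEDist_self).le

/-! ### The space `X` -/

/-- The ambient space: bounded functions `ℕ → ℝ`. -/
abbrev OmegaE : Type := BoundedContinuousFunction ℕ ℝ

/-- Codes for finite "distance matrices" with rational entries. -/
def FMS : Type := Σ n : ℕ, Fin (n + 1) → Fin (n + 1) → ℚ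

instance : Countable FMS := by unfold FMS; infer_instance
instance : Nonempty FMS := ⟨⟨0, fun _ _ => 0⟩⟩

/-- A surjective enumeration of the codes. -/
def fmsEnc : ℕ → FMS := (exists_surjective_nat FMS).choose

lemma fmsEnc_surj : Function.Surjective fmsEnc := (exists_surjective_nat FMS).choose_spec

/-- Size parameter of the `k`-th cluster. -/
def csize (k : ℕ) : ℕ := (fmsEnc k).1

/-- Matrix of the `k`-th cluster, as real numbers. -/
def cq (k : ℕ) (i b : Fin (csize k + 1)) : ℝ := ((fmsEnc k).2 i b : ℝ)

lemma FMS_snd_congr {s t : FMS} (h : s = t) (i b : Fin (s.1 + 1)) :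
    (s.2 i b : ℝ) = (t.2 (Fin.cast (by rw [h]) i) (Fin.cast (by rw [h]) b) : ℝ) := by
  subst h; rfl

/-- Crude bound for the matrix entries. -/
def cM (k : ℕ) : ℝ := 1 + ∑ i, ∑ b, |cq k i b|

lemma cM_pos (k : ℕ) : 0 < cM k := by
  have : (0:ℝ) ≤ ∑ i, ∑ b, |cq k i b| :=
    Finset.sum_nonneg fun i _ => Finset.sum_nonneg fun b _ => abs_nonneg _
  unfold cM; linarith

lemma abs_cq_le (k : ℕ) (i b : Fin (csize k + 1)) : |cq k i b| ≤ cM k := by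
  have h1 : |cq k i b| ≤ ∑ b', |cq k i b'| :=
    Finset.single_le_sum (f := fun b' => |cq k i b'|) (fun c _ => abs_nonneg _)
      (Finset.mem_univ b)
  have h2 : (∑ b', |cq k i b'|) ≤ ∑ i', ∑ b', |cq k i' b'| :=
    Finset.single_le_sum (f := fun i' => ∑ b', |cq k i' b'|)
      (fun c _ => Finset.sum_nonneg fun b' _ => abs_nonneg _) (Finset.mem_univ i)
  unfold cM; linarith

/-- The scale of the `k`-th cluster. -/
def cEps (k : ℕ) : ℝ := (1 / (k + 1)) / cM k

lemma cEps_pos (k : ℕ) : 0 < cEps k := div_pos (by positivity) (cM_pos k)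

/-- Coordinates of the points of the `k`-th cluster. -/
def pf (k : ℕ) (i : Fin (csize k + 1)) : ℕ → ℝ := fun m =>
  if (Nat.unpair m).1 = k then
    (if h : (Nat.unpair m).2 < csize k + 1 then cEps k * cq k i ⟨_, h⟩
     else if (Nat.unpair m).2 = csize k + 1 then 1 / (k + 1) else 0)
  else 0

lemma pf_bound (k : ℕ) (i : Fin (csize k + 1)) (m : ℕ) : |pf k i m| ≤ 1 / (k + 1) := by
  have hM := cM_pos k
  have hε := cEps_pos k
  have key : cEps k * cM k = 1 / (k + 1) := div_mul_cancel₀ _ hM.ne'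
  unfold pf
  split_ifs with h1 h2 h3
  · rw [abs_mul, abs_of_nonneg hε.le]
    calc cEps k * |cq k i ⟨_, h2⟩| ≤ cEps k * cM k :=
          mul_le_mul_of_nonneg_left (abs_cq_le _ _ _) hε.le
      _ = 1 / (k + 1) := key
  · rw [abs_of_nonneg (by positivity : (0:ℝ) ≤ 1 / (k+1:ℝ))]
  · simp; positivity
  · simp; positivity

/-- The points of the clusters, as bounded functions. -/
def cpt (k : ℕ) (i : Fin (csize k + 1)) : OmegaE :=
  ⟨⟨pf k i, continuous_of_discreteTopology⟩, ⟨2 / (k + 1), fun x y => by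
    have hx := pf_bound k i x
    have hy := pf_bound k i y
    rw [Real.dist_eq]
    have : |pf k i x - pf k i y| ≤ |pf k i x| + |pf k i y| := abs_sub _ _
    calc |pf k i x - pf k i y| ≤ |pf k i x| + |pf k i y| := this
      _ ≤ 1 / (k+1) + 1 / (k+1) := by gcongr
      _ = 2 / (k+1) := by ring⟩⟩

lemma cpt_apply (k : ℕ) (i : Fin (csize k + 1)) (m : ℕ) : cpt k i m = pf k i m := rfl

lemma pf_block (k : ℕ) (i b : Fin (csize k + 1)) :
    pf k i (Nat.pair k b.val) = cEps k * cq k i b := by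
  unfold pf
  simp [Nat.unpair_pair, b.isLt]

lemma pf_tag (k : ℕ) (i : Fin (csize k + 1)) :
    pf k i (Nat.pair k (csize k + 1)) = 1 / (k + 1) := by
  unfold pf
  simp [Nat.unpair_pair]

lemma pf_other (k : ℕ) (i : Fin (csize k + 1)) (m : ℕ) (h : (Nat.unpair m).1 ≠ k) :
    pf k i m = 0 := by
  unfold pf; rw [if_neg h]

/-- Distances inside a cluster: upper bound. -/
lemma dist_cpt_le (k : ℕ) (i i' : Fin (csize k + 1)) {C : ℝ} (hC : 0 ≤ C)
    (h : ∀ b, |cq k i b - cq k i' b| ≤ C) :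
    dist (cpt k i) (cpt k i') ≤ cEps k * C := by
  have hε := cEps_pos k
  apply (BoundedContinuousFunction.dist_le (by positivity)).2
  intro m
  rw [Real.dist_eq, cpt_apply, cpt_apply]
  unfold pf
  split_ifs with h1 h2 h3
  · rw [← mul_sub, abs_mul, abs_of_nonneg hε.le]
    exact mul_le_mul_of_nonneg_left (h _) hε.le
  · simp; positivity
  · simp; positivity
  · simp; positivity

/-- Distances inside a cluster: lower bound. -/
lemma dist_cpt_ge (k : ℕ) (i i' b : Fin (csize k + 1)) :
    cEps k * |cq k i b - cq k i' b| ≤ dist (cpt k i) (cpt k i') := by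
  have := BoundedContinuousFunction.dist_coe_le_dist (f := cpt k i) (g := cpt k i')
    (Nat.pair k b.val)
  rw [Real.dist_eq, cpt_apply, cpt_apply, pf_block, pf_block, ← mul_sub, abs_mul,
    abs_of_nonneg (cEps_pos k).le] at this
  exact this

lemma dist_cpt_zero_le (k : ℕ) (i : Fin (csize k + 1)) : dist (cpt k i) 0 ≤ 1 / (k + 1) := by
  apply (BoundedContinuousFunction.dist_le (by positivity)).2
  intro m
  simp only [BoundedContinuousFunction.coe_zero, Pi.zero_apply, Real.dist_eq, sub_zero]
  exact pf_bound k i m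

lemma cpt_ne_cpt {k k' : ℕ} (h : k ≠ k') (i : Fin (csize k + 1)) (i' : Fin (csize k' + 1)) :
    cpt k i ≠ cpt k' i' := by
  intro hEq
  have h1 : cpt k i (Nat.pair k (csize k + 1)) = 1 / (k + 1) := pf_tag k i
  have h2 : cpt k' i' (Nat.pair k (csize k + 1)) = 0 := by
    rw [cpt_apply]
    exact pf_other _ _ _ (by rw [Nat.unpair_pair]; exact h.symm ∘ Eq.symm ∘ id)
  rw [hEq, h2] at h1
  have : (0:ℝ) < 1 / (k + 1) := by positivity
  rw [← h1] at this
  exact lt_irrefl _ this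

lemma cpt_ne_zero (k : ℕ) (i : Fin (csize k + 1)) : cpt k i ≠ 0 := by
  intro hEq
  have h1 : cpt k i (Nat.pair k (csize k + 1)) = 1 / (k + 1) := pf_tag k i
  rw [hEq] at h1
  simp only [BoundedContinuousFunction.coe_zero, Pi.zero_apply] at h1
  have : (0:ℝ) < 1 / (k + 1) := by positivity
  rw [← h1] at this
  exact lt_irrefl _ this

/-- Enumeration of all cluster points (with junk value `0`). -/
def P' (m : ℕ) : OmegaE :=
  if h : (Nat.unpair m).2 < csize (Nat.unpair m).1 + 1 then cpt (Nat.unpair m).1 ⟨_, h⟩ else 0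

lemma cpt_congr {a a' : ℕ} (h : a = a') {i : Fin (csize a + 1)} {i' : Fin (csize a' + 1)}
    (hv : (i : ℕ) = (i' : ℕ)) : cpt a i = cpt a' i' := by
  subst h; congr 1; exact Fin.ext hv

lemma P'_pair (k : ℕ) (i : Fin (csize k + 1)) : P' (Nat.pair k i.val) = cpt k i := by
  have hc : (Nat.unpair (Nat.pair k i.val)).2 < csize (Nat.unpair (Nat.pair k i.val)).1 + 1 := by
    simp [Nat.unpair_pair, i.isLt]
  unfold P'
  rw [dif_pos hc]
  exact cpt_congr (by simp) (by simp)

/-- The underlying set of the space `X`. -/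
def Xset : Set OmegaE := insert 0 (Set.range P')

/-- The space `X` of Theorem 1.5. -/
abbrev Xsp : Type := ↥Xset

/-- The point at infinity of `X`. -/
def pt0 : Xsp := ⟨0, Set.mem_insert _ _⟩

lemma cpt_mem_Xset (k : ℕ) (i : Fin (csize k + 1)) : cpt k i ∈ Xset :=
  Set.mem_insert_iff.2 (Or.inr ⟨Nat.pair k i.val, P'_pair k i⟩)

lemma finite_far (ε : ℝ) (hε : 0 < ε) : {x : Xsp | ε ≤ dist x pt0}.Finite := by
  obtain ⟨N, hN⟩ := exists_nat_gt (1 / ε)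
  have hsub : {x : Xsp | ε ≤ dist x pt0} ⊆
      Subtype.val ⁻¹' (⋃ a ∈ Set.Iio N, Set.range (cpt a)) := by
    rintro ⟨x, hx⟩ hdist
    simp only [Set.mem_setOf_eq] at hdist
    have hdist' : ε ≤ dist x (0 : OmegaE) := hdist
    have hxne : x ≠ 0 := by
      intro h; rw [h, dist_self] at hdist'; linarith
    rcases hx with h0 | ⟨m, rfl⟩
    · exact absurd h0 hxne
    unfold P' at hxne hdist' ⊢
    split_ifs at hxne hdist' ⊢ with hm
    swap
    · exact absurd rfl hxne
    set a := (Nat.unpair m).1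
    have hle : dist (cpt a ⟨_, hm⟩) (0 : OmegaE) ≤ 1 / (a + 1) := dist_cpt_zero_le _ _
    have haN : a < N := by
      by_contra hcon
      push_neg at hcon
      have h1 : (1:ℝ) / (a + 1) ≤ 1 / (N + 1) := by
        apply one_div_le_one_div_of_le (by positivity)
        have : (N:ℝ) ≤ a := by exact_mod_cast hcon
        linarith
      have h2 : ε ≤ 1 / (N + 1) := le_trans (hdist'.trans hle) h1
      have h3 : 1 / ε ≥ N + 1 := by
        rw [ge_iff_le, ← one_div_one_div (N + 1 : ℝ)]
        apply one_div_le_one_div_of_le hε h2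
      linarith
    simp only [Set.mem_preimage, Set.mem_iUnion]
    exact ⟨a, haN, ⟨⟨_, hm⟩, rfl⟩⟩
  refine Set.Finite.subset ?_ hsub
  apply Set.Finite.preimage Subtype.val_injective.injOn
  exact Set.Finite.biUnion (Set.finite_Iio N) fun a _ => Set.finite_range _

instance : Countable Xsp :=
  (((Set.countable_range P').insert 0).to_subtype)

instance : Infinite {x : Xsp // x ≠ pt0} := by
  apply Infinite.of_injective
    (fun k : ℕ => (⟨⟨cpt k 0, cpt_mem_Xset k 0⟩, fun h => cpt_ne_zero k 0
      (congrArg Subtype.val h)⟩ : {x : Xsp // x ≠ pt0}))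
  intro k k' h
  by_contra hkk
  exact cpt_ne_cpt hkk 0 0 (congrArg (fun z => (z.1 : OmegaE)) h)

/-- `X` is a metric `(ω₀+1)`-space. -/
lemma Xsp_isOmegaPlusOne : IsOmegaPlusOneSpace Xsp := by
  classical
  obtain ⟨dS⟩ := nonempty_denumerable {x : Xsp // x ≠ pt0}
  letI := dS
  let e : {x : Xsp // x ≠ pt0} ≃ ℕ := Denumerable.eqv _
  let ψ : OnePoint ℕ ≃ Xsp := (Equiv.optionCongr e.symm).trans (Equiv.optionSubtypeNe pt0)
  have hpsi : ψ OnePoint.infty = pt0 := rfl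
  have hcont : Continuous ψ := by
    rw [OnePoint.continuous_iff_from_discrete]
    rw [show (ψ OnePoint.infty) = pt0 from hpsi]
    rw [Metric.tendsto_nhds]
    intro ε hε
    rw [Filter.eventually_cofinite]
    have : {n : ℕ | ¬ dist (ψ (OnePoint.some n)) pt0 < ε} ⊆
        (fun n : ℕ => ψ (OnePoint.some n)) ⁻¹' {x : Xsp | ε ≤ dist x pt0} := by
      intro n hn
      simp only [Set.mem_setOf_eq, not_lt] at hn
      exact hn
    refine Set.Finite.subset ?_ this
    apply Set.Finite.preimage ((ψ.injective.comp (Option.some_injective _)).injOn)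
    exact finite_far ε hε
  exact ⟨(hcont.homeoOfEquivCompactToT2 (f := ψ)).symm⟩

/-! ### Every compact space is a pseudo-cone of `X` -/

lemma scaled_dist_eq {A : Set Xsp} {u : ℝ} (hu : 0 < u) (a b : ↥A) :
    @dist _ (scaledSubMS A u hu).toDist a b = u * dist (a.1 : OmegaE) (b.1 : OmegaE) := rfl

/-- The key approximation step: realizing a given finite matrix close to a net of `K`. -/
lemma cluster_ghDist_le (K : Type u) [MetricSpace K] [Nonempty K] (δ : ℝ) (hδ : 0 < δ)
    (k : ℕ) (x : Fin (csize k + 1) → K)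
    (hq1 : ∀ i b, dist (x i) (x b) + δ ≤ cq k i b)
    (hq2 : ∀ i b, cq k i b ≤ dist (x i) (x b) + 2 * δ)
    (hcov : ∀ p : K, ∃ i, dist p (x i) < δ) :
    ∃ (A : Set Xsp) (u : ℝ) (hu : 0 < u),
      @ghDist ↥A K (scaledSubMS A u hu) _ ≤ ENNReal.ofReal (4 * δ) := by
  classical
  set A : Set Xsp := {y : Xsp | ∃ i, (y : OmegaE) = cpt k i} with hA
  have hε := cEps_pos k
  set u : ℝ := (cEps k)⁻¹ with hu_def
  have hu : 0 < u := inv_pos.2 hε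
  refine ⟨A, u, hu, ?_⟩
  haveI : Nonempty ↥A := ⟨⟨⟨cpt k 0, cpt_mem_Xset k 0⟩, ⟨0, rfl⟩⟩⟩
  have hmem : ∀ (i : Fin (csize k + 1)), (⟨⟨cpt k i, cpt_mem_Xset k i⟩, ⟨i, rfl⟩⟩ : ↥A) ∈
      (Set.univ : Set ↥A) := fun _ => trivial
  set idx : ↥A → Fin (csize k + 1) := fun a => Classical.choose a.2 with hidx_def
  have hidx : ∀ a : ↥A, ((a : Xsp) : OmegaE) = cpt k (idx a) := fun a => Classical.choose_spec a.2
  set f : ↥A → K := fun a => x (idx a) with hf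
  -- two-sided estimate for the rescaled distances
  have hcore : ∀ i i' : Fin (csize k + 1),
      |u * dist (cpt k i) (cpt k i') - dist (x i) (x i')| ≤ δ := by
    intro i i'
    have hup : u * dist (cpt k i) (cpt k i') ≤ dist (x i) (x i') + δ := by
      have hC : (0:ℝ) ≤ dist (x i) (x i') + δ := by positivity
      have hb : ∀ b, |cq k i b - cq k i' b| ≤ dist (x i) (x i') + δ := by
        intro b
        have t1 := hq1 i b
        have t2 := hq2 i b
        have t3 := hq1 i' b
        have t4 := hq2 i' b
        have t5 : |dist (x i) (x b) - dist (x i') (x b)| ≤ dist (x i) (x i') :=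
          abs_dist_sub_le _ _ _
        rw [abs_le] at t5 ⊢
        constructor <;> nlinarith [t5.1, t5.2]
      have := dist_cpt_le k i i' hC hb
      calc u * dist (cpt k i) (cpt k i') ≤ u * (cEps k * (dist (x i) (x i') + δ)) := by
            apply mul_le_mul_of_nonneg_left this hu.le
        _ = dist (x i) (x i') + δ := by
            field_simp [hu_def]
            rw [hu_def, inv_mul_cancel₀ hε.ne']
    have hlow : dist (x i) (x i') - δ ≤ u * dist (cpt k i) (cpt k i') := by
      have h1 : cEps k * |cq k i i' - cq k i' i'| ≤ dist (cpt k i) (cpt k i') :=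
        dist_cpt_ge k i i' i'
      have h2 : dist (x i) (x i') - δ ≤ |cq k i i' - cq k i' i'| := by
        have t1 := hq1 i i'
        have t2 := hq2 i' i'
        have h0 : dist (x i') (x i') = 0 := dist_self _
        have : dist (x i) (x i') - δ ≤ cq k i i' - cq k i' i' := by nlinarith
        exact this.trans (le_abs_self _)
      calc dist (x i) (x i') - δ ≤ |cq k i i' - cq k i' i'| := h2
        _ = u * (cEps k * |cq k i i' - cq k i' i'|) := by
            field_simp [hu_def]
            rw [hu_def, mul_assoc, inv_mul_cancel₀ hε.ne', mul_one]
        _ ≤ u * dist (cpt k i) (cpt k i') := mul_le_mul_of_nonneg_left h1 hu.le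
    rw [abs_le]
    constructor <;> linarith
  have hdist : ∀ a b : ↥A,
      |@dist _ (scaledSubMS A u hu).toDist a b - dist (f a) (f b)| ≤ 2 * (2 * δ) := by
    intro a b
    have h1 : @dist _ (scaledSubMS A u hu).toDist a b
        = u * dist (cpt k (idx a)) (cpt k (idx b)) := by
      rw [scaled_dist_eq hu a b, hidx a, hidx b]
    rw [h1]
    have := hcore (idx a) (idx b)
    rw [abs_le] at this ⊢
    constructor <;> [linarith [this.1]; linarith [this.2]]
  have hdense : ∀ p : K, ∃ a : ↥A, dist (f a) p ≤ 2 * δ := by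
    intro p
    obtain ⟨i, hi⟩ := hcov p
    refine ⟨⟨⟨cpt k i, cpt_mem_Xset k i⟩, ⟨i, rfl⟩⟩, ?_⟩
    set a : ↥A := ⟨⟨cpt k i, cpt_mem_Xset k i⟩, ⟨i, rfl⟩⟩ with ha
    have heq : cpt k (idx a) = cpt k i := (hidx a).symm
    have h0 : u * dist (cpt k (idx a)) (cpt k i) = 0 := by rw [heq, dist_self, mul_zero]
    have := hcore (idx a) i
    rw [h0, abs_le] at this
    have hxd : dist (x (idx a)) (x i) ≤ δ := by linarith [this.1]
    calc dist (f a) p ≤ dist (x (idx a)) (x i) + dist (x i) p := dist_triangle _ _ _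
      _ ≤ δ + δ := by
          have := dist_comm p (x i)
          gcongr
          linarith [hi, dist_comm p (x i)]
      _ = 2 * δ := by ring
  have := @ghDist_le_of_approx ↥A K (scaledSubMS A u hu) _ _ f (2 * δ) (by positivity)
    hdist hdense
  calc @ghDist ↥A K (scaledSubMS A u hu) _ ≤ ENNReal.ofReal (2 * (2 * δ)) := this
    _ = ENNReal.ofReal (4 * δ) := by congr 1; ring

/-- One approximation step for an arbitrary nonempty compact `K`. -/
lemma step_ghDist (K : Type u) [MetricSpace K] [CompactSpace K] [Nonempty K]
    (δ : ℝ) (hδ : 0 < δ) :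
    ∃ (A : Set Xsp) (u : ℝ) (hu : 0 < u),
      @ghDist ↥A K (scaledSubMS A u hu) _ ≤ ENNReal.ofReal (4 * δ) := by
  classical
  have htb : TotallyBounded (Set.univ : Set K) := isCompact_univ.totallyBounded
  obtain ⟨t, htfin, htcov⟩ := (Metric.totallyBounded_iff).1 htb δ hδ
  have htne : t.Nonempty := by
    obtain ⟨p⟩ := ‹Nonempty K›
    have := htcov (Set.mem_univ p)
    simp only [Set.mem_iUnion] at this
    obtain ⟨y, hy, _⟩ := this
    exact ⟨y, hy⟩
  set F : Finset K := htfin.toFinset with hF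
  have hFne : F.Nonempty := by
    obtain ⟨y, hy⟩ := htne
    exact ⟨y, htfin.mem_toFinset.2 hy⟩
  obtain ⟨n, hn⟩ : ∃ n, F.card = n + 1 :=
    Nat.exists_eq_succ_of_ne_zero (Finset.card_ne_zero_of_mem hFne.choose_spec)
  set x : Fin (n + 1) → K := fun i => (F.equivFin.symm (Fin.cast hn.symm i) : K) with hx
  have hxcov : ∀ p : K, ∃ i : Fin (n + 1), dist p (x i) < δ := by
    intro p
    have := htcov (Set.mem_univ p)
    simp only [Set.mem_iUnion] at this
    obtain ⟨y, hy, hball⟩ := this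
    have hyF : y ∈ F := htfin.mem_toFinset.2 hy
    refine ⟨Fin.cast hn (F.equivFin ⟨y, hyF⟩), ?_⟩
    have : x (Fin.cast hn (F.equivFin ⟨y, hyF⟩)) = y := by
      simp [hx, Fin.cast_cast, Fin.cast_eq_self]
    rw [this]
    exact Metric.mem_ball.1 hball
  -- choose rational approximations
  have hratex : ∀ i b : Fin (n + 1), ∃ r : ℚ,
      dist (x i) (x b) + δ < (r : ℝ) ∧ (r : ℝ) < dist (x i) (x b) + 2 * δ :=
    fun i b => exists_rat_btwn (by linarith)
  choose q hq1 hq2 using hratex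
  obtain ⟨k, hk⟩ := fmsEnc_surj ⟨n, q⟩
  have hsz : csize k + 1 = n + 1 := by rw [csize, hk]
  set x' : Fin (csize k + 1) → K := fun i => x (Fin.cast hsz i) with hx'
  have hcqeq : ∀ i b : Fin (csize k + 1),
      cq k i b = (q (Fin.cast hsz i) (Fin.cast hsz b) : ℝ) := by
    intro i b
    have := FMS_snd_congr hk i b
    exact this
  apply cluster_ghDist_le K δ hδ k x'
  · intro i b; rw [hcqeq]; exact (hq1 _ _).le
  · intro i b; rw [hcqeq]; exact (hq2 _ _).le
  · intro p
    obtain ⟨i, hi⟩ := hxcov p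
    exact ⟨Fin.cast hsz.symm i, by simpa [hx', Fin.cast_cast, Fin.cast_eq_self] using hi⟩

end Aux

/-- **Theorem 1.5.** There exists an `(ω₀+1)`-metric space `X` such that every compact
metric space is a pseudo-cone of `X`. -/
theorem exists_omegaPlusOne_space_with_all_compact_pseudoCones :
    ∃ (X : Type) (_ : MetricSpace X), IsOmegaPlusOneSpace X ∧
      ∀ (K : Type u) (_ : MetricSpace K), CompactSpace K → IsPseudoCone X K := by
  refine ⟨Xsp, inferInstance, Xsp_isOmegaPlusOne, ?_⟩
  intro K _ _
  rcases isEmpty_or_nonempty K with hK | hK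
  · -- the empty compact space
    refine ⟨fun _ => (∅ : Set Xsp), fun _ => 1, fun _ => one_pos, ?_⟩
    have hzero : ∀ i : ℕ, @ghDist ↥(∅ : Set Xsp) K
        (scaledSubMS (∅ : Set Xsp) 1 one_pos) _ = 0 := by
      intro i
      letI := scaledSubMS (∅ : Set Xsp) (1:ℝ) one_pos
      exact ghDist_empty_empty
    exact Filter.Tendsto.congr (fun i => (hzero i).symm)
      (tendsto_const_nhds : Tendsto (fun _ : ℕ => (0:ℝ≥0∞)) atTop (𝓝 0))
  · have main : ∀ j : ℕ, ∃ (A : Set Xsp) (u : ℝ) (hu : 0 < u),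
        @ghDist ↥A K (scaledSubMS A u hu) _ ≤ ENNReal.ofReal (4 * (1 / (j + 1))) :=
      fun j => step_ghDist K (1 / (j + 1)) (by positivity)
    choose A u hu hle using main
    refine ⟨A, u, hu, ?_⟩
    have h4 : Tendsto (fun j : ℕ => ENNReal.ofReal (4 * (1 / ((j:ℝ) + 1)))) atTop (𝓝 0) := by
      have hreal : Tendsto (fun j : ℕ => 4 * (1 / ((j:ℝ) + 1))) atTop (𝓝 0) := by
        simpa using (tendsto_const_nhds (x := (4:ℝ))).mul
          tendsto_one_div_add_atTop_nhds_zero_nat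
      simpa using ENNReal.tendsto_ofReal hreal
    exact tendsto_of_tendsto_of_tendsto_of_le_of_le tendsto_const_nhds h4
      (fun j => zero_le) hle

end
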